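/- There exist positive constants c_1, c_2 independent of N, and vectors v^+, v^- ∈ V_0 with ‖Dv^+‖_{ℓ^2_ε} = ‖Dv^-‖_{ℓ^2_ε} = 1, such that ⟨L_2 v^+, v^+⟩ ≥ c_1(N^{1/2} − c_2) and ⟨L_2 v^-, v^-⟩ ≤ −c_1(N^{1/2} − c_2). -/

import Mathlib

noncomputable def eps (N : ℤ) : ℝ := 1 / (N : ℝ)

noncomputable def Dd (N : ℤ) (v : ℤ → ℝ) (j : ℤ) : ℝ := (v j - v (j-1)) / eps N

noncomputable def L2op (N K : ℤ) (v : ℤ → ℝ) (j : ℤ) : ℝ :=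
  if -K ≤ j ∧ j ≤ K then (-v (j+2) + 2 * v j - v (j-2)) / (eps N)^2
  else 4 * (-v (j+1) + 2 * v j - v (j-1)) / (eps N)^2

/-! The witnesses are the tent `φ j = (N - |j|) / (2N)`, which carries half of the unit strain
norm, plus a spike `±1 / (2√N)` at the first continuum site `K + 1`, which carries the other half.
`L₂ φ` lives on the kink `{-1, 0, 1}` and gives `⟨L₂ φ, v⟩ = 2 - ε`; the spike against itself
gives `2`. But `L₂` is not symmetric across the interface: the atomistic row `K - 1` sees the spike
with weight `N²`, the continuum rows `K + 1`, `K + 2` with weights `8N²`, `-4N²`, so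
`⟨L₂ spike, φ⟩ = ±(3(N - K) - 1) / (4√N)`, of size at least `√N / 4` because `2K ≤ N`. -/

open Finset

noncomputable def tent (N j : ℤ) : ℝ := ((N : ℝ) - |(j : ℝ)|) / (2 * N)

noncomputable def tentSpike (N K : ℤ) (a : ℝ) : ℤ → ℝ := tent N + Pi.single (K + 1) a

section
variable {N K : ℤ}

lemma tent_of_nonneg {j : ℤ} (hj : 0 ≤ j) : tent N j = (N - j) / (2 * N) := by
  rw [tent, abs_of_nonneg (Int.cast_nonneg hj)]

lemma tent_of_nonpos {j : ℤ} (hj : j ≤ 0) : tent N j = (N + j) / (2 * N) := by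
  rw [tent, abs_of_nonpos (Int.cast_nonpos.mpr hj), sub_neg_eq_add]

lemma tent_self (hN : 0 ≤ N) : tent N N = 0 := by
  rw [tent_of_nonneg hN, sub_self, zero_div]

lemma tent_neg_self (hN : 0 ≤ N) : tent N (-N) = 0 := by
  rw [tent_of_nonpos (neg_nonpos.2 hN)]
  push_cast
  rw [add_neg_cancel, zero_div]

lemma div_eps (x : ℝ) : x / eps N = x * N := by
  rw [eps, div_div_eq_mul_div, div_one]

lemma div_eps_sq (x : ℝ) : x / eps N ^ 2 = x * N ^ 2 := by
  rw [eps, div_pow, one_pow, div_div_eq_mul_div, div_one]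

lemma Dd_add (u w : ℤ → ℝ) (j : ℤ) : Dd N (u + w) j = Dd N u j + Dd N w j := by
  simp only [Dd, Pi.add_apply]
  ring

lemma L2op_add (u w : ℤ → ℝ) (j : ℤ) : L2op N K (u + w) j = L2op N K u j + L2op N K w j := by
  simp only [L2op, Pi.add_apply]
  split_ifs <;> ring

lemma Dd_tent_sq (hN : N ≠ 0) (j : ℤ) : Dd N (tent N) j ^ 2 = 1 / 4 := by
  have hN' : (N : ℝ) ≠ 0 := Int.cast_ne_zero.2 hN
  rw [Dd, div_eps]
  rcases le_or_gt j 0 with hj | hj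
  · rw [tent_of_nonpos hj, tent_of_nonpos (by omega)]
    push_cast
    field_simp
    ring
  · rw [tent_of_nonneg hj.le, tent_of_nonneg (by omega)]
    push_cast
    field_simp
    ring

lemma Dd_tent_of_pos (hN : N ≠ 0) {j : ℤ} (hj : 0 < j) : Dd N (tent N) j = -1 / 2 := by
  have hN' : (N : ℝ) ≠ 0 := Int.cast_ne_zero.2 hN
  rw [Dd, div_eps, tent_of_nonneg hj.le, tent_of_nonneg (by omega)]
  push_cast
  field_simp
  ring

lemma Dd_single_self (m : ℤ) (a : ℝ) : Dd N (Pi.single m a) m = a * N := by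
  simp [Dd, div_eps]

lemma Dd_single_succ (m : ℤ) (a : ℝ) : Dd N (Pi.single m a) (m + 1) = -(a * N) := by
  simp [Dd, div_eps]

lemma Dd_single_of_ne {m j : ℤ} (a : ℝ) (h₀ : j ≠ m) (h₁ : j ≠ m + 1) :
    Dd N (Pi.single m a) j = 0 := by
  simp [Dd, h₀, show j - 1 ≠ m by omega]

lemma card_Icc_neg_add_one (hN : 0 ≤ N) : ((Icc (-N + 1) N).card : ℝ) = 2 * N := by
  rw [Int.card_Icc, show N + 1 - (-N + 1) = 2 * N by ring]
  exact_mod_cast Int.toNat_of_nonneg (by omega : 0 ≤ 2 * N)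

lemma sum_sq_Dd_tentSpike (hK : 0 ≤ K) (hKN : K + 2 ≤ N) (a : ℝ) :
    ∑ j ∈ Icc (-N + 1) N, Dd N (tentSpike N K a) j ^ 2 = N / 2 + 2 * a ^ 2 * N ^ 2 := by
  have hN : N ≠ 0 := by omega
  have hsupp : ∀ j ∈ Icc (-N + 1) N, j ∉ ({K + 1, K + 2} : Finset ℤ) →
      2 * Dd N (tent N) j * Dd N (Pi.single (K + 1) a) j + Dd N (Pi.single (K + 1) a) j ^ 2
        = 0 := by
    intro j _ hj
    simp only [mem_insert, mem_singleton, not_or] at hj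
    rw [Dd_single_of_ne a hj.1 (by omega)]
    ring
  have hsub : ({K + 1, K + 2} : Finset ℤ) ⊆ Icc (-N + 1) N := by
    intro j hj
    simp only [mem_insert, mem_singleton] at hj
    rw [mem_Icc]
    omega
  calc ∑ j ∈ Icc (-N + 1) N, Dd N (tentSpike N K a) j ^ 2
      = ∑ j ∈ Icc (-N + 1) N, Dd N (tent N) j ^ 2
        + ∑ j ∈ Icc (-N + 1) N, (2 * Dd N (tent N) j * Dd N (Pi.single (K + 1) a) j
          + Dd N (Pi.single (K + 1) a) j ^ 2) := by
        rw [← sum_add_distrib]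
        exact sum_congr rfl fun j _ => by rw [tentSpike, Dd_add]; ring
    -- the cross terms cancel: `Dφ = -1/2` at both sites where the spike has strain `±aN`
    _ = N / 2 + 2 * a ^ 2 * N ^ 2 := by
        rw [← sum_subset hsub hsupp, sum_pair (by omega), sum_congr rfl fun j _ => Dd_tent_sq hN j,
          sum_const, nsmul_eq_mul, card_Icc_neg_add_one (by omega),
          Dd_tent_of_pos hN (by omega), Dd_tent_of_pos hN (by omega), Dd_single_self,
          show K + 2 = K + 1 + 1 by ring, Dd_single_succ]
        ring

lemma L2op_tent_of_ne {j : ℤ} (hm : j ≠ -1) (h₀ : j ≠ 0) (hp : j ≠ 1) :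
    L2op N K (tent N) j = 0 := by
  rw [L2op, div_eps_sq, div_eps_sq]
  rcases le_or_gt j 0 with hj | hj
  · split_ifs <;> rw [tent_of_nonpos (by omega), tent_of_nonpos hj, tent_of_nonpos (by omega)] <;>
      push_cast <;> ring
  · split_ifs <;> rw [tent_of_nonneg (by omega), tent_of_nonneg hj.le, tent_of_nonneg (by omega)] <;>
      push_cast <;> ring

lemma L2op_tent_zero (hK : 0 ≤ K) (hN : N ≠ 0) : L2op N K (tent N) 0 = 2 * N := by
  have hN' : (N : ℝ) ≠ 0 := Int.cast_ne_zero.2 hN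
  rw [L2op, if_pos (by omega), div_eps_sq, tent_of_nonneg (by omega), tent_of_nonneg le_rfl,
    tent_of_nonpos (by omega)]
  push_cast
  field_simp
  ring

lemma L2op_tent_one (hK : 1 ≤ K) (hN : N ≠ 0) : L2op N K (tent N) 1 = N := by
  have hN' : (N : ℝ) ≠ 0 := Int.cast_ne_zero.2 hN
  rw [L2op, if_pos (by omega), div_eps_sq, tent_of_nonneg (by omega), tent_of_nonneg (by omega),
    tent_of_nonpos (by omega)]
  push_cast
  field_simp
  ring

lemma L2op_tent_neg_one (hK : 1 ≤ K) (hN : N ≠ 0) : L2op N K (tent N) (-1) = N := by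
  have hN' : (N : ℝ) ≠ 0 := Int.cast_ne_zero.2 hN
  rw [L2op, if_pos (by omega), div_eps_sq, tent_of_nonneg (by omega), tent_of_nonpos (by omega),
    tent_of_nonpos (by omega)]
  push_cast
  field_simp
  ring

lemma L2op_single_of_ne (hK : 0 ≤ K) {j : ℤ} (a : ℝ) (h₁ : j ≠ K - 1) (h₂ : j ≠ K + 1)
    (h₃ : j ≠ K + 2) : L2op N K (Pi.single (K + 1) a) j = 0 := by
  rw [L2op]
  simp only [Pi.single_apply]
  split_ifs <;> first | omega | simp

lemma L2op_single_pred (hK : 1 ≤ K) (a : ℝ) :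
    L2op N K (Pi.single (K + 1) a) (K - 1) = -(a * N ^ 2) := by
  rw [L2op, if_pos (by omega), div_eps_sq, show K - 1 + 2 = K + 1 by ring, Pi.single_eq_same,
    Pi.single_eq_of_ne (by omega), Pi.single_eq_of_ne (by omega)]
  ring

lemma L2op_single_self (a : ℝ) :
    L2op N K (Pi.single (K + 1) a) (K + 1) = 8 * a * N ^ 2 := by
  rw [L2op, if_neg (by omega), div_eps_sq, Pi.single_eq_same, Pi.single_eq_of_ne (by omega),
    Pi.single_eq_of_ne (by omega)]
  ring

lemma L2op_single_succ (a : ℝ) :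
    L2op N K (Pi.single (K + 1) a) (K + 2) = -4 * a * N ^ 2 := by
  rw [L2op, if_neg (by omega), div_eps_sq, show K + 2 - 1 = K + 1 by ring, Pi.single_eq_same,
    Pi.single_eq_of_ne (by omega), Pi.single_eq_of_ne (by omega)]
  ring

lemma tentSpike_apply (a : ℝ) (j : ℤ) :
    tentSpike N K a j = tent N j + (Pi.single (K + 1) a : ℤ → ℝ) j := rfl

lemma tentSpike_self (hK : 0 ≤ K) (hKN : K + 2 ≤ N) (a : ℝ) : tentSpike N K a N = 0 := by
  rw [tentSpike_apply, tent_self (by omega), Pi.single_eq_of_ne (by omega), add_zero]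

lemma tentSpike_neg_self (hK : 0 ≤ K) (hKN : K + 2 ≤ N) (a : ℝ) : tentSpike N K a (-N) = 0 := by
  rw [tentSpike_apply, tent_neg_self (by omega), Pi.single_eq_of_ne (by omega), add_zero]

lemma sum_L2op_tent_mul_tentSpike (hK : 1 ≤ K) (hKN : K + 2 ≤ N) (a : ℝ) :
    ∑ j ∈ Icc (-N + 1) N, L2op N K (tent N) j * tentSpike N K a j = 2 * N - 1 := by
  have hN : N ≠ 0 := by omega
  have hN' : (N : ℝ) ≠ 0 := Int.cast_ne_zero.2 hN
  have hsub : ({-1, 0, 1} : Finset ℤ) ⊆ Icc (-N + 1) N := by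
    intro j hj
    simp only [mem_insert, mem_singleton] at hj
    rw [mem_Icc]
    omega
  have hsupp : ∀ j ∈ Icc (-N + 1) N, j ∉ ({-1, 0, 1} : Finset ℤ) →
      L2op N K (tent N) j * tentSpike N K a j = 0 := by
    intro j _ hj
    simp only [mem_insert, mem_singleton, not_or] at hj
    rw [L2op_tent_of_ne hj.1 hj.2.1 hj.2.2, zero_mul]
  rw [← sum_subset hsub hsupp, sum_insert (by simp), sum_pair (by omega), tentSpike_apply,
    tentSpike_apply, tentSpike_apply, L2op_tent_neg_one hK hN, L2op_tent_zero (by omega) hN,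
    L2op_tent_one hK hN, Pi.single_eq_of_ne (by omega), Pi.single_eq_of_ne (by omega),
    Pi.single_eq_of_ne (by omega), tent_of_nonpos (by omega), tent_of_nonneg le_rfl,
    tent_of_nonneg zero_le_one]
  push_cast
  field_simp
  ring

lemma sum_L2op_single_mul_tentSpike (hK : 1 ≤ K) (hKN : K + 2 ≤ N) (a : ℝ) :
    ∑ j ∈ Icc (-N + 1) N, L2op N K (Pi.single (K + 1) a) j * tentSpike N K a j
      = a * N * (3 * (N - K) - 1) / 2 + 8 * a ^ 2 * N ^ 2 := by
  have hN' : (N : ℝ) ≠ 0 := Int.cast_ne_zero.2 (by omega)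
  have hsub : ({K - 1, K + 1, K + 2} : Finset ℤ) ⊆ Icc (-N + 1) N := by
    intro j hj
    simp only [mem_insert, mem_singleton] at hj
    rw [mem_Icc]
    omega
  have hsupp : ∀ j ∈ Icc (-N + 1) N, j ∉ ({K - 1, K + 1, K + 2} : Finset ℤ) →
      L2op N K (Pi.single (K + 1) a) j * tentSpike N K a j = 0 := by
    intro j _ hj
    simp only [mem_insert, mem_singleton, not_or] at hj
    rw [L2op_single_of_ne (by omega) a hj.1 hj.2.1 hj.2.2, zero_mul]
  rw [← sum_subset hsub hsupp, sum_insert (by simp; omega), sum_pair (by omega), tentSpike_apply,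
    tentSpike_apply, tentSpike_apply, L2op_single_pred hK, L2op_single_self, L2op_single_succ,
    Pi.single_eq_same, Pi.single_eq_of_ne (by omega), Pi.single_eq_of_ne (by omega),
    tent_of_nonneg (by omega), tent_of_nonneg (by omega), tent_of_nonneg (by omega)]
  push_cast
  field_simp
  ring

lemma sum_L2op_mul_tentSpike (hK : 1 ≤ K) (hKN : K + 2 ≤ N) (a : ℝ) :
    ∑ j ∈ Icc (-N + 1) (N - 1), L2op N K (tentSpike N K a) j * tentSpike N K a j
      = 2 * N - 1 + a * N * (3 * (N - K) - 1) / 2 + 8 * a ^ 2 * N ^ 2 := by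
  calc ∑ j ∈ Icc (-N + 1) (N - 1), L2op N K (tentSpike N K a) j * tentSpike N K a j
      = ∑ j ∈ Icc (-N + 1) N, L2op N K (tentSpike N K a) j * tentSpike N K a j := by
        refine sum_subset (Icc_subset_Icc le_rfl (by omega)) fun j hj hj' => ?_
        rw [mem_Icc] at hj hj'
        rw [show j = N by omega, tentSpike_self (by omega) hKN, mul_zero]
    _ = ∑ j ∈ Icc (-N + 1) N, L2op N K (tent N) j * tentSpike N K a j
        + ∑ j ∈ Icc (-N + 1) N, L2op N K (Pi.single (K + 1) a) j * tentSpike N K a j := by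
        rw [← sum_add_distrib]
        exact sum_congr rfl fun j _ => by rw [tentSpike, L2op_add, add_mul]
    _ = 2 * N - 1 + a * N * (3 * (N - K) - 1) / 2 + 8 * a ^ 2 * N ^ 2 := by
        rw [sum_L2op_tent_mul_tentSpike hK hKN, sum_L2op_single_mul_tentSpike hK hKN]
        ring

lemma strainNorm_tentSpike (hK : 0 ≤ K) (hKN : K + 2 ≤ N) {a : ℝ} (ha : 4 * a ^ 2 * N = 1) :
    √(eps N * ∑ j ∈ Icc (-N + 1) N, Dd N (tentSpike N K a) j ^ 2) = 1 := by
  have hN' : (N : ℝ) ≠ 0 := Int.cast_ne_zero.2 (by omega)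
  rw [sum_sq_Dd_tentSpike hK hKN, eps, Real.sqrt_eq_one]
  field_simp
  linear_combination ha

lemma rayleigh_tentSpike (hK : 1 ≤ K) (hKN : K + 2 ≤ N) {a : ℝ} (ha : 4 * a ^ 2 * N = 1) :
    eps N * ∑ j ∈ Icc (-N + 1) (N - 1), L2op N K (tentSpike N K a) j * tentSpike N K a j
      = 4 - 1 / N + a * (3 * (N - K) - 1) / 2 := by
  have hN' : (N : ℝ) ≠ 0 := Int.cast_ne_zero.2 (by omega)
  rw [sum_L2op_mul_tentSpike hK hKN, eps]
  field_simp
  linear_combination 4 * (N : ℝ) * ha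
end

/-- There are constants `c₁, c₂ > 0` independent of `N` and vectors
`v⁺, v⁻ ∈ V₀` with unit `ℓ²_ε` strain norm such that
`⟨L₂v⁺, v⁺⟩ ≥ c₁(N^{1/2} - c₂)` and `⟨L₂v⁻, v⁻⟩ ≤ -c₁(N^{1/2} - c₂)`. -/
theorem L2_unbounded_rayleigh :
    ∃ c1 c2 : ℝ, 0 < c1 ∧ 0 < c2 ∧
      ∀ N K : ℤ, 1 ≤ N → 2 ≤ K → 2 * K ≤ N →
        ∃ vp vm : ℤ → ℝ,
          vp (-N) = 0 ∧ vp N = 0 ∧ vm (-N) = 0 ∧ vm N = 0 ∧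
          Real.sqrt (eps N * ∑ j ∈ Finset.Icc (-N+1) N, (Dd N vp j)^2) = 1 ∧
          Real.sqrt (eps N * ∑ j ∈ Finset.Icc (-N+1) N, (Dd N vm j)^2) = 1 ∧
          c1 * (Real.sqrt (N : ℝ) - c2) ≤
            eps N * ∑ j ∈ Finset.Icc (-N+1) (N-1), L2op N K vp j * vp j ∧
          eps N * ∑ j ∈ Finset.Icc (-N+1) (N-1), L2op N K vm j * vm j ≤
            -(c1 * (Real.sqrt (N : ℝ) - c2)) := by
  refine ⟨1 / 4, 16, by norm_num, by norm_num, fun N K _ hK hKN => ?_⟩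
  have hN : (0 : ℝ) < N := by exact_mod_cast (by omega : 0 < N)
  set a := √N / (2 * N)
  have ha : 4 * a ^ 2 * N = 1 := by
    rw [div_pow, mul_pow, Real.sq_sqrt hN.le]
    field_simp
    norm_num
  have ha' : 4 * (-a) ^ 2 * N = 1 := by rwa [neg_sq]
  have h_inv_N : 1 / (N : ℝ) ≤ 1 := by
    rw [div_le_one hN]
    exact_mod_cast (by omega : 1 ≤ N)
  have h_gap : √N / 4 ≤ a * (3 * (N - K) - 1) / 2 := by
    have h_ratio : 1 ≤ (3 * (N - K) - 1 : ℝ) / N := by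
      rw [le_div_iff₀ hN, one_mul]
      exact_mod_cast (by omega : N ≤ 3 * (N - K) - 1)
    calc √N / 4 ≤ √N / 4 * ((3 * (N - K) - 1 : ℝ) / N) :=
          le_mul_of_one_le_right (by positivity) h_ratio
      _ = a * (3 * (N - K) - 1) / 2 := by ring
  have hK₀ : 0 ≤ K := by omega
  have hK₁ : 1 ≤ K := by omega
  have hK₂ : K + 2 ≤ N := by omega
  refine ⟨tentSpike N K a, tentSpike N K (-a), tentSpike_neg_self hK₀ hK₂ a,
    tentSpike_self hK₀ hK₂ a, tentSpike_neg_self hK₀ hK₂ (-a), tentSpike_self hK₀ hK₂ (-a),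
    strainNorm_tentSpike hK₀ hK₂ ha, strainNorm_tentSpike hK₀ hK₂ ha', ?_, ?_⟩
  · rw [rayleigh_tentSpike hK₁ hK₂ ha]
    linarith
  · rw [rayleigh_tentSpike hK₁ hK₂ ha', neg_mul]
    linarith [one_div_pos.2 hN]
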